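/- arXiv:1007.1936 — 2 statements merged into one kernel-verified Lean document; each statement's English description precedes it below -/
import Mathlib

section
/- For all integers a₁, a₂, a₃, a₄ ≥ 2, setting s₁ = a₄·W₄ − W₃, one has the exact identity |[2*(a₄−2), a₃, a₁, 2*(a₂−1)]| · W₂ = W₄ + (a₁a₃a₄ − a₁a₃ − a₁a₄ + 2a₁ − 1) · s₁; in particular |[2*(a₄−2), a₃, a₁, 2*(a₂−1)]| · W₂ ≡ W₄ (mod s₁). -/
/-! A block of `k` twos in front of a nonempty chain `l` acts linearly on the numerators of `l`
and of its tail, with coefficients `k + 1` and `-k` (the continuant of `[2, …, 2]` is `k + 1`).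
Peeling off both blocks of twos therefore evaluates `|[2*(a₄−2), a₃, a₁, 2*(a₂−1)]|` as an explicit
polynomial in `a₁, …, a₄`, and the identity is then a polynomial identity. -/

/-- Hirzebruch–Jung numerator: |[]| = 1, |[n]| = n,
|[n₁, n₂, …]| = n₁·|[n₂, …]| − |[n₃, …]|. -/
def hj : List ℤ → ℤ
  | [] => 1
  | [n] => n
  | n :: m :: l => n * hj (m :: l) - hj l

open List

theorem hj_cons_cons (a b : ℤ) (l : List ℤ) : hj (a :: b :: l) = a * hj (b :: l) - hj l := rfl

theorem hj_cons_of_ne_nil (a : ℤ) {l : List ℤ} (hl : l ≠ []) :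
    hj (a :: l) = a * hj l - hj l.tail := by
  obtain ⟨b, l, rfl⟩ := exists_cons_of_ne_nil hl
  rfl

theorem hj_replicate_two_append {l : List ℤ} (hl : l ≠ []) :
    ∀ k : ℕ, hj (replicate k 2 ++ l) = (k + 1) * hj l - k * hj l.tail
  | 0 => by simp
  | 1 => by simp [hj_cons_of_ne_nil 2 hl]
  | k + 2 => by
    have hne : replicate (k + 1) 2 ++ l ≠ [] := by simp [hl]
    rw [replicate_succ, cons_append, hj_cons_of_ne_nil 2 hne, hj_replicate_two_append hl (k + 1),
      replicate_succ, cons_append, tail_cons, hj_replicate_two_append hl k]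
    push_cast
    ring

theorem hj_replicate_two : ∀ m : ℕ, hj (replicate m 2) = m + 1
  | 0 => rfl
  | m + 1 => by
    rw [replicate_succ', hj_replicate_two_append (cons_ne_nil 2 [])]
    simp only [hj, tail_cons]
    push_cast
    ring

theorem hj_cons_replicate_two (a : ℤ) : ∀ m : ℕ, hj (a :: replicate m 2) = a * (m + 1) - m
  | 0 => by simp [hj]
  | m + 1 => by
    rw [replicate_succ, hj_cons_cons, ← replicate_succ, hj_replicate_two, hj_replicate_two]
    push_cast
    ring

theorem hj_replicate_two_append_pair_append_replicate_two (a b : ℤ) (k m : ℕ) :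
    hj (replicate k 2 ++ [a, b] ++ replicate m 2) =
      (k + 1) * (a * (b * (m + 1) - m) - (m + 1)) - k * (b * (m + 1) - m) := by
  rw [append_assoc, cons_append, cons_append, nil_append,
    hj_replicate_two_append (cons_ne_nil _ _), tail_cons, hj_cons_cons,
    hj_cons_replicate_two, hj_replicate_two]

theorem hj_mod_s_one_general (a₁ a₂ a₃ a₄ : ℤ) (h₂ : 2 ≤ a₂) (h₄ : 2 ≤ a₄)
    (s₁ : ℤ)
    (hs₁ : s₁ = a₄ * (a₁ * a₂ * a₃ - a₂ * a₃ + a₃ - 1) - (a₁ * a₂ * a₄ - a₁ * a₂ + a₂ - 1)) :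
    hj (List.replicate (a₄ - 2).toNat 2 ++ [a₃, a₁] ++ List.replicate (a₂ - 1).toNat 2) *
        (a₁ * a₃ * a₄ - a₁ * a₄ + a₁ - 1) =
      (a₁ * a₂ * a₃ - a₂ * a₃ + a₃ - 1) +
        (a₁ * a₃ * a₄ - a₁ * a₃ - a₁ * a₄ + 2 * a₁ - 1) * s₁ ∧
    hj (List.replicate (a₄ - 2).toNat 2 ++ [a₃, a₁] ++ List.replicate (a₂ - 1).toNat 2) *
        (a₁ * a₃ * a₄ - a₁ * a₄ + a₁ - 1) ≡
      (a₁ * a₂ * a₃ - a₂ * a₃ + a₃ - 1) [ZMOD s₁] := by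
  have hk : ((a₄ - 2).toNat : ℤ) = a₄ - 2 := Int.toNat_of_nonneg (by omega)
  have hm : ((a₂ - 1).toNat : ℤ) = a₂ - 1 := Int.toNat_of_nonneg (by omega)
  have key : hj (replicate (a₄ - 2).toNat 2 ++ [a₃, a₁] ++ replicate (a₂ - 1).toNat 2) *
        (a₁ * a₃ * a₄ - a₁ * a₄ + a₁ - 1) =
      (a₁ * a₂ * a₃ - a₂ * a₃ + a₃ - 1) +
        (a₁ * a₃ * a₄ - a₁ * a₃ - a₁ * a₄ + 2 * a₁ - 1) * s₁ := by
    rw [hj_replicate_two_append_pair_append_replicate_two, hk, hm, hs₁]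
    ring
  exact ⟨key, key ▸ Int.add_mul_modulus_modEq_iff.mpr rfl⟩

theorem hj_mod_s_one (a₁ a₂ a₃ a₄ : ℤ) (h₁ : 2 ≤ a₁) (h₂ : 2 ≤ a₂) (h₃ : 2 ≤ a₃) (h₄ : 2 ≤ a₄)
    (s₁ : ℤ)
    (hs₁ : s₁ = a₄ * (a₁ * a₂ * a₃ - a₂ * a₃ + a₃ - 1) - (a₁ * a₂ * a₄ - a₁ * a₂ + a₂ - 1)) :
    hj (List.replicate (a₄ - 2).toNat 2 ++ [a₃, a₁] ++ List.replicate (a₂ - 1).toNat 2) *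
        (a₁ * a₃ * a₄ - a₁ * a₄ + a₁ - 1) =
      (a₁ * a₂ * a₃ - a₂ * a₃ + a₃ - 1) +
        (a₁ * a₃ * a₄ - a₁ * a₃ - a₁ * a₄ + 2 * a₁ - 1) * s₁ ∧
    hj (List.replicate (a₄ - 2).toNat 2 ++ [a₃, a₁] ++ List.replicate (a₂ - 1).toNat 2) *
        (a₁ * a₃ * a₄ - a₁ * a₄ + a₁ - 1) ≡
      (a₁ * a₂ * a₃ - a₂ * a₃ + a₃ - 1) [ZMOD s₁] :=
  hj_mod_s_one_general a₁ a₂ a₃ a₄ h₂ h₄ s₁ hs₁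
end

section
/- For every integer b ≥ 3, one has |[3, b, 2*7, 3, 2*(b−3)]| = 27b² − 63b + 37, i.e. the Hirzebruch–Jung numerator of the list 3, b, seven 2's, 3, followed by b−3 twos equals 27b² − 63b + 37. -/
theorem hj_replicate_two_s16 (k : ℕ) : hj (List.replicate k 2) = k + 1 := by
  induction k using Nat.twoStepInduction with
  | zero => rfl
  | one => rfl
  | more k ih₀ ih₁ =>
    rw [List.replicate_succ, List.replicate_succ, hj, ← List.replicate_succ, ih₁, ih₀]
    push_cast
    ring

theorem hj_cons_replicate_two_s16 (x : ℤ) (k : ℕ) :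
    hj (x :: List.replicate k 2) = x * (k + 1) - k := by
  cases k with
  | zero => simp [hj]
  | succ k =>
    rw [List.replicate_succ, hj, ← List.replicate_succ, hj_replicate_two_s16, hj_replicate_two_s16]
    push_cast
    ring

theorem hj_truncated_Sb (b : ℤ) (hb : 3 ≤ b) :
    hj ([3, b] ++ List.replicate 7 2 ++ [3] ++ List.replicate (b - 3).toNat 2) =
      27 * b ^ 2 - 63 * b + 37 := by
  have hk : ((b - 3).toNat : ℤ) = b - 3 := Int.toNat_of_nonneg (by omega)
  simp only [List.replicate_succ, List.replicate_zero, List.cons_append, List.nil_append, hj,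
    hj_cons_replicate_two_s16, hj_replicate_two_s16, hk]
  ring
end
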